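/- arXiv:2408.16566 — 6 statements merged into one kernel-verified Lean document; each statement's English description precedes it below -/
import Mathlib

section
/- Let θ_1, ..., θ_n ∈ [0,1]. Then 1 - ∏_{i=1}^n (1 - θ_i) ≥ (1 - e^{-1}) · min{1, ∑_{i=1}^n θ_i}. -/
/-- For `θ_1, ..., θ_n ∈ [0,1]`,
`1 - ∏_{i=1}^n (1 - θ_i) ≥ (1 - e^{-1}) · min{1, ∑_{i=1}^n θ_i}`. -/
theorem one_sub_prod_ge (n : ℕ) (θ : Fin n → ℝ) (hθ : ∀ i, θ i ∈ Set.Icc (0 : ℝ) 1) :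
    (1 - Real.exp (-1)) * min 1 (∑ i, θ i) ≤ 1 - ∏ i, (1 - θ i) := by
  set S := ∑ i, θ i with hS
  have hS0 : 0 ≤ S := Finset.sum_nonneg fun i _ => (hθ i).1
  have hprod : ∏ i, (1 - θ i) ≤ Real.exp (-S) := by
    rw [hS, ← Finset.sum_neg_distrib, Real.exp_sum]
    exact Finset.prod_le_prod (fun i _ => by linarith [(hθ i).2])
      (fun i _ => by linarith [Real.add_one_le_exp (-θ i)])
  have key : (1 - Real.exp (-1)) * min 1 S ≤ 1 - Real.exp (-S) := by
    rcases le_total 1 S with h | h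
    · rw [min_eq_left h, mul_one]
      have := Real.exp_le_exp.2 (neg_le_neg h)
      linarith
    · rw [min_eq_right h]
      have hconv := convexOn_exp.2 (Set.mem_univ 0) (Set.mem_univ (-1))
        (by linarith : (0:ℝ) ≤ 1 - S) hS0 (by ring)
      simp only [smul_eq_mul, mul_zero, mul_neg_one, zero_add, Real.exp_zero] at hconv
      have : Real.exp (-S) ≤ (1 - S) * 1 + S * Real.exp (-1) := by
        convert hconv using 2
      nlinarith
  linarith
end

section
/- Let T ⊆ V be a finite set, and for each w ∈ T let S_w be a nonnegative random variable, all independent, and let A ⊆ T be a random subset, independent of the S_w's, that includes each element of T independently with probability p. Fix j and let μ^j_w = E[min{S_w, 2^j}]. If p · ∑_{w∈T} μ^j_w ≤ 2^{j-1}, then Pr[∑_{w∈A} S_w ≤ 2^j - 1] ≥ 1/2. -/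
open MeasureTheory ProbabilityTheory

/-- Let `T` be a finite set of vertices, each `w ∈ T` carrying an independent nonnegative
integer-valued size `S_w`, and let `A` be a random subset (given by indicators `χ_w`) that
includes each element independently with probability `p`, independently of the sizes.
If `p · ∑_{w∈T} E[min{S_w, 2^j}] ≤ 2^{j-1}`, then `Pr[∑_{w∈A} S_w ≤ 2^j - 1] ≥ 1/2`. -/
theorem sampled_sizes_fit
    {Ω V : Type*} [MeasureSpace Ω] [IsProbabilityMeasure (ℙ : Measure Ω)]
    (T : Finset V) (S : V → Ω → ℕ) (χ : V → Ω → Bool)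
    (hSmeas : ∀ w, Measurable (S w)) (hχmeas : ∀ w, Measurable (χ w))
    (hindep : iIndepFun
      (Sum.elim (fun w ω => (S w ω : ℝ)) (fun w ω => if χ w ω then (1 : ℝ) else 0)) ℙ)
    (p : ℝ) (hp0 : 0 ≤ p) (hp1 : p ≤ 1)
    (hχp : ∀ w, ℙ {ω | χ w ω = true} = ENNReal.ofReal p)
    (j : ℕ)
    (hsmall : p * ∑ w ∈ T, (∫ ω, min ((S w ω : ℝ)) (2 ^ j)) ≤ 2 ^ j / 2) :
    (1 : ℝ) / 2 ≤
      (ℙ {ω | (∑ w ∈ T, if χ w ω then (S w ω : ℝ) else 0) ≤ 2 ^ j - 1}).toReal := by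
  classical
  set ε : ℝ := 2 ^ j with hε
  have hεpos : (0:ℝ) < ε := by positivity
  -- measurability facts
  have hSr : ∀ w, Measurable (fun ω => (S w ω : ℝ)) := fun w =>
    (measurable_from_top).comp (hSmeas w)
  have hind : ∀ w, Measurable (fun ω => if χ w ω then (1:ℝ) else 0) := fun w =>
    Measurable.ite ((hχmeas w) (MeasurableSet.singleton true)) measurable_const
      measurable_const
  have hmin : ∀ w, Measurable (fun ω => min ((S w ω : ℝ)) (2 ^ j)) := fun w =>
    (hSr w).min measurable_const
  -- the truncated, sampled sum
  set Y : Ω → ℝ := fun ω => ∑ w ∈ T,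
    (if χ w ω then (1:ℝ) else 0) * min ((S w ω : ℝ)) (2 ^ j) with hY
  have hYmeas : Measurable Y := by
    apply Finset.measurable_sum
    intro w _
    exact (hind w).mul (hmin w)
  -- independence of indicator and truncated size, for each w
  have hIw : ∀ w, IndepFun (fun ω => if χ w ω then (1:ℝ) else 0)
      (fun ω => min ((S w ω : ℝ)) (2 ^ j)) ℙ := by
    intro w
    have h := hindep.indepFun (show (Sum.inr w : V ⊕ V) ≠ Sum.inl w by simp)
    exact h.comp (measurable_id (α := ℝ))
      (show Measurable fun x : ℝ => min x ((2:ℝ) ^ j) from measurable_id.min measurable_const)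
  -- integrability of each summand
  have hint : ∀ w, Integrable (fun ω =>
      (if χ w ω then (1:ℝ) else 0) * min ((S w ω : ℝ)) (2 ^ j)) ℙ := by
    intro w
    refine Integrable.mono' (integrable_const ε) ((hind w).mul (hmin w)).aestronglyMeasurable
      (ae_of_all _ fun ω => ?_)
    rw [Real.norm_eq_abs, abs_mul]
    have h1 : |if χ w ω then (1:ℝ) else 0| ≤ 1 := by split <;> simp
    have h2 : |min ((S w ω : ℝ)) (2 ^ j)| ≤ ε := by
      rw [abs_of_nonneg (le_min (by positivity) (by positivity))]
      exact min_le_right _ _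
    calc |if χ w ω then (1:ℝ) else 0| * |min ((S w ω : ℝ)) (2 ^ j)|
        ≤ 1 * ε := mul_le_mul h1 h2 (abs_nonneg _) zero_le_one
      _ = ε := one_mul ε
  have hYint : Integrable Y ℙ := integrable_finset_sum _ fun w _ => hint w
  have hYnonneg : ∀ ω, 0 ≤ Y ω := fun ω =>
    Finset.sum_nonneg fun w _ => mul_nonneg (by split <;> simp)
      (le_min (by positivity) (by positivity))
  -- expectation of the indicator
  have hEind : ∀ w, (∫ ω, if χ w ω then (1:ℝ) else 0) = p := by
    intro w
    have heq : (fun ω => if χ w ω then (1:ℝ) else 0) =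
        Set.indicator {ω | χ w ω = true} (1 : Ω → ℝ) := by
      ext ω
      by_cases h : χ w ω = true <;> simp [Set.indicator, h]
    rw [heq]
    have h := MeasureTheory.integral_indicator_one (μ := (ℙ : Measure Ω))
      (show MeasurableSet {ω | χ w ω = true} from (hχmeas w) (MeasurableSet.singleton true))
    rw [measureReal_def, hχp w, ENNReal.toReal_ofReal hp0] at h
    exact h
  -- expectation of Y
  have hEY : (∫ ω, Y ω) ≤ ε / 2 := by
    have : (∫ ω, Y ω) = ∑ w ∈ T, p * (∫ ω, min ((S w ω : ℝ)) (2 ^ j)) := by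
      rw [hY, integral_finset_sum _ fun w _ => hint w]
      refine Finset.sum_congr rfl fun w _ => ?_
      have hm := (hIw w).integral_mul_eq_mul_integral (hind w).aestronglyMeasurable
        (hmin w).aestronglyMeasurable
      rw [hEind w] at hm
      exact hm
    rw [this, ← Finset.mul_sum]
    exact hsmall
  -- Markov
  have hMarkov : (ℙ {ω | ε ≤ Y ω}).toReal ≤ 1 / 2 := by
    have h := mul_meas_ge_le_integral_of_nonneg (ae_of_all _ hYnonneg) hYint ε
    have h2 : ε * (ℙ {ω | ε ≤ Y ω}).toReal ≤ ε * (1/2) := by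
      calc ε * (ℙ {ω | ε ≤ Y ω}).toReal ≤ ∫ ω, Y ω := h
        _ ≤ ε / 2 := hEY
        _ = ε * (1/2) := by ring
    exact le_of_mul_le_mul_left h2 hεpos
  -- the bad event is contained in the Markov event
  set A : Set Ω := {ω | (∑ w ∈ T, if χ w ω then (S w ω : ℝ) else 0) ≤ 2 ^ j - 1} with hA
  have hAmeas : MeasurableSet A := by
    apply measurableSet_le
    · exact Finset.measurable_sum _ fun w _ =>
        Measurable.ite ((hχmeas w) (MeasurableSet.singleton true)) (hSr w) measurable_const
    · exact measurable_const
  have hsub : Aᶜ ⊆ {ω | ε ≤ Y ω} := by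
    intro ω hω
    simp only [hA, Set.mem_compl_iff, Set.mem_setOf_eq, not_le] at hω
    -- the sum is a cast of a natural number
    have hcast : (∑ w ∈ T, if χ w ω then (S w ω : ℝ) else 0) =
        ((∑ w ∈ T, if χ w ω then S w ω else 0 : ℕ) : ℝ) := by
      push_cast
      refine Finset.sum_congr rfl fun w _ => ?_
      split <;> simp
    set N : ℕ := ∑ w ∈ T, if χ w ω then S w ω else 0 with hN
    rw [hcast] at hω
    have hNge : (2:ℝ) ^ j ≤ (N : ℝ) := by
      have h2 : (2:ℕ) ^ j ≤ N := by
        by_contra hc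
        push_neg at hc
        have hc' : N + 1 ≤ 2 ^ j := hc
        have : (N:ℝ) + 1 ≤ (2:ℝ) ^ j := by exact_mod_cast hc'
        linarith
      exact_mod_cast h2
    show ε ≤ Y ω
    by_cases hbig : ∃ w ∈ T, χ w ω = true ∧ 2 ^ j ≤ S w ω
    · obtain ⟨w, hwT, hwχ, hwS⟩ := hbig
      have hterm : (if χ w ω then (1:ℝ) else 0) * min ((S w ω : ℝ)) (2 ^ j) = ε := by
        rw [hwχ]
        simp only [if_true, one_mul]
        rw [min_eq_right (show ((2:ℝ) ^ j) ≤ (S w ω : ℝ) by exact_mod_cast hwS)]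
      calc ε = (if χ w ω then (1:ℝ) else 0) * min ((S w ω : ℝ)) (2 ^ j) := hterm.symm
        _ ≤ Y ω := Finset.single_le_sum (f := fun w =>
            (if χ w ω then (1:ℝ) else 0) * min ((S w ω : ℝ)) (2 ^ j))
            (fun v _ => mul_nonneg (by split <;> simp)
              (le_min (by positivity) (by positivity))) hwT
    · push_neg at hbig
      have : Y ω = (N : ℝ) := by
        rw [hY, hN]
        push_cast
        refine Finset.sum_congr rfl fun w hw => ?_
        by_cases h : χ w ω = true
        · rw [h]
          simp only [if_true, one_mul]
          rw [min_eq_left]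
          have := hbig w hw h
          have : (S w ω : ℝ) < 2 ^ j := by exact_mod_cast this
          linarith
        · simp [h]
      rw [this]
      exact hNge
  -- conclude
  have hcompl : (ℙ Aᶜ).toReal ≤ 1 / 2 :=
    le_trans (ENNReal.toReal_mono (measure_ne_top _ _) (measure_mono hsub)) hMarkov
  have hsum : (ℙ A).toReal + (ℙ Aᶜ).toReal = 1 := by
    rw [← ENNReal.toReal_add (measure_ne_top _ _) (measure_ne_top _ _),
      measure_add_measure_compl hAmeas]
    simp
  linarith
end

section
/- Let S_1, ..., S_n be nonnegative random variables (not necessarily independent) and let W > 0. Suppose an adaptive process visits a (random) subset of indices, and for each visited index i the size S_i is added, stopping rules arbitrary, subject to: at any point, the sum of sizes of all visited indices except possibly the last one is at most W. Fix j with 2^j ≤ W. Then for the truncations X^j_i = min{S_i, 2^j}, with T_i denoting the (random, possibly infinite) start time of item i, we have ∑_i E[X^j_i · 1{T_i ∈ [2^j - 1, 2^{j+1} - 1)}] ≤ 2^{j+1}. -/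
open MeasureTheory ProbabilityTheory
open scoped ENNReal

lemma key_pointwise {n : ℕ} (S : Fin n → ℕ) (T : Fin n → ℝ≥0∞)
    (hstart : ∀ i, T i ≠ ⊤ →
      T i = ∑ k ∈ Finset.univ.filter fun k => T k < T i, (S k : ℝ≥0∞))
    (hdistinct : ∀ i k, i ≠ k → T i ≠ ⊤ → T k ≠ ⊤ → T i ≠ T k)
    (j : ℕ) :
    ∑ i ∈ Finset.univ.filter
        (fun i => (2:ℝ≥0∞)^j - 1 ≤ T i ∧ T i < 2^(j+1) - 1),
      ((min (S i) (2^j) : ℕ) : ℝ≥0∞) ≤ 2^(j+1) := by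
  set A := Finset.univ.filter
      (fun i : Fin n => (2:ℝ≥0∞)^j - 1 ≤ T i ∧ T i < 2^(j+1) - 1) with hA
  rcases A.eq_empty_or_nonempty with h | hne
  · simp [h]
  have hmemA : ∀ i ∈ A, (2:ℝ≥0∞)^j - 1 ≤ T i ∧ T i < 2^(j+1) - 1 := by
    intro i hi; simpa [hA] using hi
  have htop : ∀ i ∈ A, T i ≠ ⊤ := by
    intro i hi
    exact ne_top_of_lt (hmemA i hi).2
  obtain ⟨M, hM, hMmax⟩ := A.exists_max_image T hne
  obtain ⟨m, hm, hmmin⟩ := A.exists_min_image T hne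
  -- main structural inequality
  have h1 : T m + ∑ i ∈ A.erase M, (S i : ℝ≥0∞) ≤ T M := by
    have hMt := htop M hM
    rw [hstart M hMt, hstart m (htop m hm)]
    have hdisj : Disjoint (Finset.univ.filter fun k => T k < T m) (A.erase M) := by
      rw [Finset.disjoint_left]
      intro k hk hk'
      have h1 : T k < T m := by simpa using hk
      exact absurd (hmmin k (Finset.mem_of_mem_erase hk')) (not_le.mpr h1)
    have hsub : (Finset.univ.filter fun k => T k < T m) ∪ A.erase M ⊆
        Finset.univ.filter fun k => T k < T M := by
      intro k hk
      simp only [Finset.mem_union, Finset.mem_filter, Finset.mem_univ, true_and] at hk ⊢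
      rcases hk with hk | hk
      · exact lt_of_lt_of_le hk (hmmin M hM)
      · have hkA := Finset.mem_of_mem_erase hk
        have hne' : k ≠ M := Finset.ne_of_mem_erase hk
        exact lt_of_le_of_ne (hMmax k hkA) (hdistinct k M hne' (htop k hkA) hMt)
    calc (∑ k ∈ Finset.univ.filter fun k => T k < T m, (S k : ℝ≥0∞))
          + ∑ i ∈ A.erase M, (S i : ℝ≥0∞)
        = ∑ k ∈ (Finset.univ.filter fun k => T k < T m) ∪ A.erase M, (S k : ℝ≥0∞) :=
          (Finset.sum_union hdisj).symm
      _ ≤ _ := Finset.sum_le_sum_of_subset hsub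
  have h2 : ∑ i ∈ A.erase M, (S i : ℝ≥0∞) ≤ 2^j := by
    have hmlow : (2:ℝ≥0∞)^j ≤ T m + 1 := by
      have := (hmemA m hm).1
      exact tsub_le_iff_right.mp this
    have hMhigh : T M + 1 ≤ 2^(j+1) := by
      have h := (hmemA M hM).2.le
      calc T M + 1 ≤ (2^(j+1) - 1) + 1 := add_le_add_left h 1
        _ = 2^(j+1) := tsub_add_cancel_of_le (one_le_two.trans (le_self_pow₀ one_le_two (Nat.succ_ne_zero j)))
    have : (2:ℝ≥0∞)^j + ∑ i ∈ A.erase M, (S i : ℝ≥0∞) ≤ 2^j + 2^j := by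
      calc (2:ℝ≥0∞)^j + ∑ i ∈ A.erase M, (S i : ℝ≥0∞)
          ≤ (T m + 1) + ∑ i ∈ A.erase M, (S i : ℝ≥0∞) := add_le_add_left hmlow _
        _ = (T m + ∑ i ∈ A.erase M, (S i : ℝ≥0∞)) + 1 := by ring
        _ ≤ T M + 1 := add_le_add_left h1 1
        _ ≤ 2^(j+1) := hMhigh
        _ = 2^j + 2^j := by rw [pow_succ, mul_two]
    exact (ENNReal.add_le_add_iff_left
      (ENNReal.pow_ne_top (by norm_num : (2:ℝ≥0∞) ≠ ⊤))).mp this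
  calc ∑ i ∈ A, ((min (S i) (2^j) : ℕ) : ℝ≥0∞)
      = ((min (S M) (2^j) : ℕ) : ℝ≥0∞)
        + ∑ i ∈ A.erase M, ((min (S i) (2^j) : ℕ) : ℝ≥0∞) :=
        (Finset.add_sum_erase A _ hM).symm
    _ ≤ 2^j + ∑ i ∈ A.erase M, (S i : ℝ≥0∞) := by
        gcongr with i hi
        · exact_mod_cast (min_le_right _ _).trans_eq (by push_cast; ring)
        · exact_mod_cast min_le_left _ _
    _ ≤ 2^j + 2^j := add_le_add_right h2 _
    _ = 2^(j+1) := by rw [pow_succ, mul_two]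

/-- An adaptive process sequentially processes items with nonnegative integer sizes `S_i`,
where `T_i` denotes the (random, possibly infinite) start time of item `i` — equal to the
total size of all items started before `i` — starts are distinct, and every start time is
at most `W`.  For `j` with `2^j ≤ W` and truncations `X^j_i = min{S_i, 2^j}`, we have
`∑_i E[X^j_i · 1{T_i ∈ [2^j - 1, 2^{j+1} - 1)}] ≤ 2^{j+1}`. -/
theorem adaptive_window_truncated_size_bound
    {Ω : Type*} [MeasureSpace Ω] [IsProbabilityMeasure (ℙ : Measure Ω)]
    (n : ℕ) (S : Fin n → Ω → ℕ) (T : Fin n → Ω → ℝ≥0∞)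
    (hSmeas : ∀ i, Measurable (S i)) (hTmeas : ∀ i, Measurable (T i))
    (W : ℝ≥0∞) (hW : W ≠ ⊤)
    (hstart : ∀ ω i, T i ω ≠ ⊤ →
      T i ω = ∑ k ∈ Finset.univ.filter fun k => T k ω < T i ω, (S k ω : ℝ≥0∞))
    (hdistinct : ∀ ω i k, i ≠ k → T i ω ≠ ⊤ → T k ω ≠ ⊤ → T i ω ≠ T k ω)
    (hbudget : ∀ ω i, T i ω ≠ ⊤ → T i ω ≤ W)
    (j : ℕ) (hj : (2 : ℝ≥0∞) ^ j ≤ W) :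
    (∑ i, ∫ ω, Set.indicator
        {ω' | (2 : ℝ≥0∞) ^ j - 1 ≤ T i ω' ∧ T i ω' < 2 ^ (j + 1) - 1}
        (fun ω' => min ((S i ω' : ℝ)) (2 ^ j)) ω)
      ≤ 2 ^ (j + 1) := by
  set f : Fin n → Ω → ℝ := fun i => Set.indicator
      {ω' | (2 : ℝ≥0∞) ^ j - 1 ≤ T i ω' ∧ T i ω' < 2 ^ (j + 1) - 1}
      (fun ω' => min ((S i ω' : ℝ)) (2 ^ j)) with hf
  have hsetmeas : ∀ i, MeasurableSet
      {ω' | (2 : ℝ≥0∞) ^ j - 1 ≤ T i ω' ∧ T i ω' < 2 ^ (j + 1) - 1} := by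
    intro i
    exact ((hTmeas i) measurableSet_Ici).inter ((hTmeas i) measurableSet_Iio)
  have hfmeas : ∀ i, Measurable (f i) := by
    intro i
    exact ((measurable_from_top.comp (hSmeas i) : Measurable fun ω => (S i ω : ℝ)).min measurable_const).indicator (hsetmeas i)
  have hfbound : ∀ i ω, 0 ≤ f i ω ∧ f i ω ≤ 2 ^ j := by
    intro i ω
    constructor
    · apply Set.indicator_nonneg
      intro x _
      positivity
    · apply Set.indicator_le' (fun x _ => min_le_right _ _) (fun x _ => by positivity)
  have hfint : ∀ i, Integrable (f i) := by
    intro i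
    apply (integrable_const ((2:ℝ)^j)).mono' (hfmeas i).aestronglyMeasurable
    filter_upwards with ω
    rw [Real.norm_eq_abs, abs_of_nonneg (hfbound i ω).1]
    exact (hfbound i ω).2
  have hpt : ∀ ω, ∑ i, f i ω ≤ 2 ^ (j+1) := by
    intro ω
    have key := key_pointwise (fun i => S i ω) (fun i => T i ω)
      (fun i => hstart ω i) (fun i k h => hdistinct ω i k h) j
    set A := Finset.univ.filter
      (fun i : Fin n => (2:ℝ≥0∞)^j - 1 ≤ T i ω ∧ T i ω < 2^(j+1) - 1) with hA
    have hsum : ∑ i, f i ω = ∑ i ∈ A, min ((S i ω : ℝ)) (2 ^ j) := by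
      rw [Finset.sum_filter]
      congr 1
      ext i
      simp only [hf, Set.indicator_apply, Set.mem_setOf_eq]
    rw [hsum]
    have hnat : (∑ i ∈ A, min (S i ω) (2^j)) ≤ 2^(j+1) := by
      have : ((∑ i ∈ A, min (S i ω) (2^j) : ℕ) : ℝ≥0∞) ≤ ((2^(j+1) : ℕ) : ℝ≥0∞) := by
        push_cast
        exact key
      exact_mod_cast this
    calc ∑ i ∈ A, min ((S i ω : ℝ)) (2 ^ j)
        = ((∑ i ∈ A, min (S i ω) (2^j) : ℕ) : ℝ) := by push_cast; rfl
      _ ≤ ((2^(j+1) : ℕ) : ℝ) := by exact_mod_cast hnat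
      _ = 2^(j+1) := by push_cast; rfl
  calc ∑ i, ∫ ω, f i ω = ∫ ω, ∑ i, f i ω := (integral_finset_sum _ (fun i _ => hfint i)).symm
    _ ≤ ∫ _ω, (2:ℝ)^(j+1) := by
        apply integral_mono (integrable_finset_sum _ (fun i _ => hfint i)) (integrable_const _)
        exact hpt
    _ = 2^(j+1) := by simp
end

section
/- In the two-point correlated knapsack orienteering setting (each vertex independently has size s¹_v > W/2 with probability p_v ≤ 1/2 carrying reward R_v, else size s²_v ≤ W/2 with zero reward), any rooted path τ satisfying the feasibility condition ∑_{w ≺_τ v} s²_w ≤ W - s¹_v for all v ∈ τ collects expected reward at least (1/4) · ∑_{v∈τ} p_v R_v, provided ∑_{v∈τ} p_v ≤ 1. -/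
open MeasureTheory ProbabilityTheory
open scoped Classical

lemma aux_exp_le (x : ℝ) (h0 : 0 ≤ x) (h2 : x ≤ 1/2) :
    Real.exp (-(2 * Real.log 2) * x) ≤ 1 - x := by
  have h := convexOn_exp.2 (Set.mem_univ (0:ℝ)) (Set.mem_univ (-Real.log 2))
    (by linarith : (0:ℝ) ≤ 1 - 2*x) (by linarith : (0:ℝ) ≤ 2*x) (by ring)
  simp only [smul_eq_mul, mul_zero, zero_add, Real.exp_zero, mul_one] at h
  have he : Real.exp (-Real.log 2) = 1/2 := by
    rw [Real.exp_neg, Real.exp_log two_pos]; norm_num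
  rw [he] at h
  calc Real.exp (-(2 * Real.log 2) * x) = Real.exp (2*x * -Real.log 2) := by ring_nf
    _ ≤ (1 - 2*x) * 1 + 2*x * (1/2) := by simpa using h
    _ = 1 - x := by ring

lemma aux_prod_quarter {n : ℕ} (p : Fin n → ℝ) (s : Finset (Fin n))
    (hp : ∀ i, 0 ≤ p i ∧ p i ≤ 1/2) (hsum : ∑ i ∈ s, p i ≤ 1) :
    (1/4 : ℝ) ≤ ∏ i ∈ s, (1 - p i) := by
  have h1 : Real.exp (-(2 * Real.log 2) * ∑ i ∈ s, p i) ≤ ∏ i ∈ s, (1 - p i) := by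
    rw [Finset.mul_sum, Real.exp_sum]
    exact Finset.prod_le_prod (fun i _ => (Real.exp_pos _).le)
      (fun i _ => aux_exp_le _ (hp i).1 (hp i).2)
  refine le_trans ?_ h1
  have h4 : Real.exp (-(2 * Real.log 2)) = 1/4 := by
    rw [Real.exp_neg, two_mul, Real.exp_add, Real.exp_log two_pos]; norm_num
  calc (1/4 : ℝ) = Real.exp (-(2 * Real.log 2)) := h4.symm
    _ ≤ _ := by
      apply Real.exp_le_exp.2
      have hl : 0 ≤ Real.log 2 := Real.log_nonneg one_le_two
      nlinarith

/-- Two-point correlated knapsack orienteering: each vertex independently has size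
`s¹_v > W/2` with probability `p_v ≤ 1/2`, carrying reward `R_v ≥ 0`, else size
`s²_v ≤ W/2` with zero reward.  Any (rooted) path `τ = v_1, ..., v_n` satisfying the
feasibility condition `∑_{w ≺ v} s²_w ≤ W - s¹_v` for all `v ∈ τ` collects expected reward
at least `(1/4) · ∑_{v∈τ} p_v R_v`, provided `∑_{v∈τ} p_v ≤ 1`. -/
theorem two_point_path_quarter_reward
    {Ω : Type*} [MeasureSpace Ω] [IsProbabilityMeasure (ℙ : Measure Ω)]
    (n : ℕ) (s1 s2 R p : Fin n → ℝ) (W : ℝ)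
    (S : Fin n → Ω → ℝ) (hmeas : ∀ i, Measurable (S i))
    (hindep : iIndepFun S ℙ)
    (htwo : ∀ i ω, S i ω = s1 i ∨ S i ω = s2 i)
    (hprob : ∀ i, ℙ {ω | S i ω = s1 i} = ENNReal.ofReal (p i))
    (hp : ∀ i, 0 ≤ p i ∧ p i ≤ 1 / 2) (hR : ∀ i, 0 ≤ R i)
    (hsize : ∀ i, W / 2 < s1 i ∧ 0 ≤ s2 i ∧ s2 i ≤ W / 2)
    (hfeas : ∀ k : Fin n, ∑ i ∈ Finset.Iio k, s2 i ≤ W - s1 k)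
    (hpsum : ∑ i, p i ≤ 1) :
    (1 / 4 : ℝ) * ∑ k, p k * R k ≤
      ∫ ω, ∑ k, if S k ω = s1 k ∧ (∑ i ∈ Finset.Iic k, S i ω) ≤ W then R k else 0 := by
  -- basic facts
  have hW : ∀ _ : Fin n, (0:ℝ) ≤ W := fun k => by
    have h1 := (hsize k).2.1; have h2 := (hsize k).2.2; linarith
  have hSnn : ∀ i ω, 0 ≤ S i ω := by
    intro i ω
    rcases htwo i ω with h | h <;> rw [h]
    · have := (hsize i).1; have := hW i; linarith
    · exact (hsize i).2.1
  have hne : ∀ i, s2 i < s1 i := fun i => lt_of_le_of_lt (hsize i).2.2 (hsize i).1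
  -- the events
  set E : Fin n → Fin n → Set Ω :=
    fun k i => {ω | S i ω = if i = k then s1 i else s2 i} with hE
  set A : Fin n → Set Ω :=
    fun k => {ω | S k ω = s1 k ∧ (∑ i ∈ Finset.Iic k, S i ω) ≤ W} with hA
  have hAeq : ∀ k, A k = ⋂ i ∈ Finset.Iic k, E k i := by
    intro k
    ext ω
    simp only [hA, hE, Set.mem_setOf_eq, Set.mem_iInter, Finset.mem_Iic]
    constructor
    · rintro ⟨hk, hsum⟩ i hik
      by_cases hik' : i = k
      · simpa [hik']
      · simp only [hik', if_false]
        rcases htwo i ω with h | h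
        · exfalso
          have hsub : ({i, k} : Finset (Fin n)) ⊆ Finset.Iic k := by
            intro j hj
            simp only [Finset.mem_insert, Finset.mem_singleton] at hj
            rcases hj with rfl | rfl <;> simp [Finset.mem_Iic, hik]
          have hge : S i ω + S k ω ≤ ∑ j ∈ Finset.Iic k, S j ω := by
            have := Finset.sum_le_sum_of_subset_of_nonneg hsub
              (fun j _ _ => hSnn j ω)
            rwa [Finset.sum_pair hik'] at this
          have h1 := (hsize i).1
          have h2 := (hsize k).1
          rw [h, hk] at hge
          linarith
        · exact h
    · intro h
      have hk : S k ω = s1 k := by simpa using h k le_rfl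
      refine ⟨hk, ?_⟩
      have hIic : Finset.Iic k = insert k (Finset.Iio k) := (Finset.Iio_insert k).symm
      rw [hIic, Finset.sum_insert (by simp)]
      have hrest : ∑ i ∈ Finset.Iio k, S i ω = ∑ i ∈ Finset.Iio k, s2 i := by
        apply Finset.sum_congr rfl
        intro i hi
        rw [Finset.mem_Iio] at hi
        have := h i hi.le
        simpa [hi.ne] using this
      rw [hk, hrest]
      linarith [hfeas k]
  -- measurability
  have hEmeas : ∀ k i, MeasurableSet (E k i) := fun k i =>
    (hmeas i) (measurableSet_singleton _)
  have hAmeas : ∀ k, MeasurableSet (A k) := by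
    intro k
    rw [hAeq k]
    exact Finset.measurableSet_biInter _ (fun i _ => hEmeas k i)
  -- probabilities of elementary events
  have hEprob : ∀ k i, ℙ (E k i) =
      if i = k then ENNReal.ofReal (p i) else ENNReal.ofReal (1 - p i) := by
    intro k i
    by_cases hik : i = k
    · simpa [hE, hik] using hprob i
    · have hcompl : E k i = {ω | S i ω = s1 i}ᶜ := by
        ext ω
        simp only [hE, hik, if_false, Set.mem_setOf_eq, Set.mem_compl_iff]
        constructor
        · intro h h'
          rw [h'] at h
          exact absurd h (ne_of_gt (hne i))
        · intro h
          rcases htwo i ω with h' | h'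
          · exact absurd h' h
          · exact h'
      rw [if_neg hik, hcompl,
        prob_compl_eq_one_sub
          (show MeasurableSet {ω | S i ω = s1 i} from (hmeas i) (measurableSet_singleton _)),
        hprob i, ← ENNReal.ofReal_one, ← ENNReal.ofReal_sub _ (hp i).1]
  -- probability of A k
  have hAprob : ∀ k, (ℙ (A k)).toReal = p k * ∏ i ∈ Finset.Iio k, (1 - p i) := by
    intro k
    have hmeasE : ∀ i ∈ Finset.Iic k,
        MeasurableSet[MeasurableSpace.comap (S i) inferInstance] (E k i) := by
      intro i _
      exact ⟨{if i = k then s1 i else s2 i}, measurableSet_singleton _, rfl⟩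
    have := hindep.meas_biInter hmeasE
    rw [hAeq k, this]
    have hIic : Finset.Iic k = insert k (Finset.Iio k) := (Finset.Iio_insert k).symm
    rw [hIic, Finset.prod_insert (by simp)]
    have hrest : ∏ i ∈ Finset.Iio k, ℙ (E k i)
        = ENNReal.ofReal (∏ i ∈ Finset.Iio k, (1 - p i)) := by
      rw [ENNReal.ofReal_prod_of_nonneg (fun i _ => by linarith [(hp i).1, (hp i).2])]
      apply Finset.prod_congr rfl
      intro i hi
      rw [Finset.mem_Iio] at hi
      rw [hEprob k i, if_neg hi.ne]
    rw [hEprob k k, if_pos rfl, hrest, ← ENNReal.ofReal_mul (hp k).1,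
      ENNReal.toReal_ofReal]
    exact mul_nonneg (hp k).1
      (Finset.prod_nonneg (fun i _ => by linarith [(hp i).1, (hp i).2]))
  -- rewrite the integrand via indicators
  have hfun : ∀ ω, (∑ k, if S k ω = s1 k ∧ (∑ i ∈ Finset.Iic k, S i ω) ≤ W then R k else 0)
      = ∑ k, (A k).indicator (fun _ => R k) ω := by
    intro ω
    apply Finset.sum_congr rfl
    intro k _
    simp [Set.indicator_apply, hA, Set.mem_setOf_eq]
  have hint : (∫ ω, ∑ k, if S k ω = s1 k ∧ (∑ i ∈ Finset.Iic k, S i ω) ≤ W then R k else 0)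
      = ∑ k, (ℙ (A k)).toReal * R k := by
    rw [MeasureTheory.integral_congr_ae (Filter.Eventually.of_forall hfun),
      MeasureTheory.integral_finset_sum _
        (fun k _ => (integrable_const (R k)).indicator (hAmeas k))]
    apply Finset.sum_congr rfl
    intro k _
    rw [MeasureTheory.integral_indicator_const (R k) (hAmeas k), smul_eq_mul]
    rfl
  rw [hint, Finset.mul_sum]
  apply Finset.sum_le_sum
  intro k _
  rw [hAprob k]
  have hquarter : (1/4 : ℝ) ≤ ∏ i ∈ Finset.Iio k, (1 - p i) := by
    apply aux_prod_quarter p _ hp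
    refine le_trans (Finset.sum_le_sum_of_subset_of_nonneg (Finset.subset_univ _)
      (fun i _ _ => (hp i).1)) hpsum
  have hpk := (hp k).1
  have hRk := hR k
  calc (1/4:ℝ) * (p k * R k)
      ≤ (∏ i ∈ Finset.Iio k, (1 - p i)) * (p k * R k) :=
        mul_le_mul_of_nonneg_right hquarter (mul_nonneg hpk hRk)
    _ = (p k * ∏ i ∈ Finset.Iio k, (1 - p i)) * R k := by ring
end

section
/- Let τ be a finite sequence v_1, ..., v_n with weights p_i ∈ [0, 1/2] and values r_i ≥ 0, and let the 'discounted value' of any subsequence σ (preserving order) be Val(σ) = ∑_{v_k ∈ σ} r_k p_k ∏_{v_i ∈ σ, i < k} (1 - p_i). Let τ_0 be the maximal prefix of τ with ∑_{v_i ∈ τ_0} p_i ≤ 1, and suppose τ_0 ≠ τ (so ∑_{v_i∈τ_0} p_i > 1/2). If Val(τ) ≥ Val(σ) for every subsequence σ of τ, then Val(τ_0) ≥ (1 - e^{-1/2}) · Val(τ). -/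
/-- The discounted value of a subsequence `σ` (a subset of indices, in increasing order)
of a sequence with weights `p` and values `r`:
`Val(σ) = ∑_{k∈σ} r_k p_k ∏_{i∈σ, i<k} (1 - p_i)`. -/
noncomputable def discVal {n : ℕ} (p r : Fin n → ℝ) (σ : Finset (Fin n)) : ℝ :=
  ∑ k ∈ σ, r k * p k * ∏ i ∈ σ.filter (fun i => i < k), (1 - p i)

/-- Let `τ = v_1, ..., v_n` with weights `p_i ∈ [0, 1/2]` and values `r_i ≥ 0`, and let
`τ_0` be the maximal prefix of `τ` with `p`-sum at most `1`, with `τ_0 ≠ τ`.  If the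
discounted value of `τ` is at least that of every subsequence of `τ`, then
`Val(τ_0) ≥ (1 - e^{-1/2}) · Val(τ)`. -/
theorem maximal_prefix_value
    (n : ℕ) (p r : Fin n → ℝ)
    (hp : ∀ i, 0 ≤ p i ∧ p i ≤ 1 / 2) (hr : ∀ i, 0 ≤ r i)
    (m : ℕ) (hm : m < n)
    (hprefix : ∑ i ∈ Finset.univ.filter (fun i : Fin n => (i : ℕ) < m), p i ≤ 1)
    (hmaximal : 1 < ∑ i ∈ Finset.univ.filter (fun i : Fin n => (i : ℕ) < m + 1), p i)
    (hopt : ∀ σ : Finset (Fin n), discVal p r σ ≤ discVal p r Finset.univ) :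
    (1 - Real.exp (-(1 / 2))) * discVal p r Finset.univ ≤
      discVal p r (Finset.univ.filter (fun i : Fin n => (i : ℕ) < m)) := by
  classical
  set T : Finset (Fin n) := Finset.univ.filter (fun i : Fin n => (i : ℕ) < m) with hT
  set S : Finset (Fin n) := Finset.univ.filter (fun i : Fin n => ¬ (i : ℕ) < m) with hS
  set P : ℝ := ∏ i ∈ T, (1 - p i) with hP
  -- sum of p over T is > 1/2
  have hmem : (⟨m, hm⟩ : Fin n) ∉ T := by simp [hT]
  have hins : Finset.univ.filter (fun i : Fin n => (i : ℕ) < m + 1)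
      = insert (⟨m, hm⟩ : Fin n) T := by
    ext i
    simp only [Finset.mem_filter, Finset.mem_univ, true_and, Finset.mem_insert, hT]
    constructor
    · intro h
      rcases Nat.lt_succ_iff_lt_or_eq.mp h with h | h
      · exact Or.inr (by simpa using h)
      · exact Or.inl (by ext; simpa using h)
    · rintro (h | h)
      · subst h; exact Nat.lt_succ_self m
      · omega
  have hsumT : 1 / 2 < ∑ i ∈ T, p i := by
    rw [hins, Finset.sum_insert hmem] at hmaximal
    have := (hp ⟨m, hm⟩).2
    linarith
  -- P ≤ exp(-1/2)
  have hPexp : P ≤ Real.exp (-(1 / 2)) := by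
    have h1 : P ≤ ∏ i ∈ T, Real.exp (-p i) := by
      apply Finset.prod_le_prod
      · intro i _; have := (hp i).2; linarith
      · intro i _
        have := Real.add_one_le_exp (-p i)
        linarith
    have h2 : ∏ i ∈ T, Real.exp (-p i) = Real.exp (∑ i ∈ T, -p i) :=
      (Real.exp_sum T fun i => -p i).symm
    have h3 : Real.exp (∑ i ∈ T, -p i) ≤ Real.exp (-(1 / 2)) := by
      apply Real.exp_le_exp.mpr
      rw [Finset.sum_neg_distrib]
      linarith
    calc P ≤ _ := h1
      _ = _ := h2
      _ ≤ _ := h3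
  have hP0 : 0 ≤ P := Finset.prod_nonneg fun i _ => by have := (hp i).2; linarith
  -- nonnegativity of discVal
  have hnn : ∀ σ : Finset (Fin n), 0 ≤ discVal p r σ := fun σ =>
    Finset.sum_nonneg fun k _ => mul_nonneg (mul_nonneg (hr k) (hp k).1)
      (Finset.prod_nonneg fun i _ => by have := (hp i).2; linarith)
  -- splitting
  have hsplit : discVal p r Finset.univ = discVal p r T + P * discVal p r S := by
    have := Finset.sum_filter_add_sum_filter_not Finset.univ
      (fun i : Fin n => (i : ℕ) < m)
      (fun k => r k * p k * ∏ i ∈ Finset.univ.filter (fun i => i < k), (1 - p i))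
    rw [discVal, ← this]
    congr 1
    · -- prefix part
      apply Finset.sum_congr rfl
      intro k hk
      simp only [hT, Finset.mem_filter] at hk
      congr 1
      apply Finset.prod_congr _ (fun _ _ => rfl)
      ext i
      simp only [Finset.mem_filter, Finset.mem_univ, true_and, hT]
      constructor
      · intro h; exact ⟨lt_trans (Fin.lt_iff_val_lt_val.mp h) hk.2, h⟩
      · rintro ⟨_, h⟩; exact h
    · -- tail part
      rw [discVal, Finset.mul_sum]
      apply Finset.sum_congr rfl
      intro k hk
      simp only [hS, Finset.mem_filter] at hk
      have hprod : ∏ i ∈ Finset.univ.filter (fun i => i < k), (1 - p i)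
          = P * ∏ i ∈ S.filter (fun i => i < k), (1 - p i) := by
        rw [hP]
        rw [← Finset.prod_filter_mul_prod_filter_not
          (Finset.univ.filter (fun i => i < k)) (fun i : Fin n => (i : ℕ) < m)]
        congr 1
        · apply Finset.prod_congr _ (fun _ _ => rfl)
          ext i
          simp only [Finset.mem_filter, Finset.mem_univ, true_and, hT]
          constructor
          · rintro ⟨_, h⟩; exact h
          · intro h
            exact ⟨Fin.lt_iff_val_lt_val.mpr (lt_of_lt_of_le h (not_lt.mp hk.2)), h⟩
        · apply Finset.prod_congr _ (fun _ _ => rfl)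
          ext i
          simp only [Finset.mem_filter, Finset.mem_univ, true_and, hS]
          tauto
      rw [hprod]; ring
  have h0 : 0 ≤ discVal p r Finset.univ := hnn _
  have hSle : discVal p r S ≤ discVal p r Finset.univ := hopt S
  have hPS : P * discVal p r S ≤ Real.exp (-(1 / 2)) * discVal p r Finset.univ := by
    calc P * discVal p r S ≤ Real.exp (-(1 / 2)) * discVal p r S :=
          mul_le_mul_of_nonneg_right hPexp (hnn S)
      _ ≤ Real.exp (-(1 / 2)) * discVal p r Finset.univ :=
          mul_le_mul_of_nonneg_left hSle (Real.exp_pos _).le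
  linarith [hsplit, hPS]
end

section
/- Let items 1, ..., n have independent sizes where item i has size W - 2^{n-i+1} + 1 with probability 1/n (yielding reward 1) and size 2^{n-i} with probability 1 - 1/n (yielding reward 0), with budget W > 2^{n+1}. The policy inserting items in order n, n-1, ..., 1 (stopping after the first positive reward) collects expected reward at least 1 - (1-1/n)^n ≥ 1 - e^{-1}: indeed, after items n, ..., j all instantiate to small sizes, the residual budget W - (2^{n-j+1} - 1 - 2^{n-j}·0) = W - ∑_{k=j}^{n} 2^{n-k} = W - 2^{n-j+1} + 1 is at least the large size of item j-1, so each successive item can be attempted, and the probability that at least one of the n items instantiates large is 1 - (1-1/n)^n. -/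
open MeasureTheory ProbabilityTheory
open scoped Classical

private lemma geom_aux (n d : ℕ) (hd : d ≤ n) :
    ∑ k ∈ Finset.Ico (n - d) n, (2 : ℝ) ^ (n - k - 1) = 2 ^ d - 1 := by
  induction d with
  | zero => simp
  | succ d ih =>
      have hd' : d ≤ n := Nat.le_of_succ_le hd
      have h1 : n - (d + 1) < n := Nat.sub_lt (Nat.lt_of_lt_of_le (Nat.succ_pos d) hd)
        (Nat.succ_pos d)
      have h2 : n - (d + 1) + 1 = n - d := by omega
      have hins : Finset.Ico (n - (d + 1)) n = insert (n - (d + 1)) (Finset.Ico (n - d) n) := by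
        ext x
        simp only [Finset.mem_Ico, Finset.mem_insert]
        omega
      rw [hins, Finset.sum_insert (by simp [Finset.mem_Ico]; omega), ih hd']
      have h3 : n - (n - (d + 1)) - 1 = d := by omega
      rw [h3]
      ring

/-- Items `1, ..., n` (item `i` encoded by `k : Fin n` with `i = k+1`) have independent
sizes: item `i` has large size `W - 2^{n-i+1} + 1` with probability `1/n` (reward `1`) and
small size `2^{n-i}` otherwise (reward `0`), with budget `W > 2^{n+1}`.  The policy
inserting items in order `n, n-1, ..., 1`, stopping after the first positive reward,
collects expected reward at least `1 - (1 - 1/n)^n`, which is at least `1 - e^{-1}`. -/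
theorem reverse_order_policy_reward
    {Ω : Type*} [MeasureSpace Ω] [IsProbabilityMeasure (ℙ : Measure Ω)]
    (n : ℕ) (hn : 1 ≤ n) (W : ℝ) (hW : 2 ^ (n + 1) < W)
    (S : Fin n → Ω → ℝ) (hmeas : ∀ k, Measurable (S k))
    (hindep : iIndepFun S ℙ)
    (htwo : ∀ (k : Fin n) ω,
      S k ω = W - 2 ^ (n - (k : ℕ)) + 1 ∨ S k ω = 2 ^ (n - (k : ℕ) - 1))
    (hprob : ∀ k : Fin n,
      ℙ {ω | S k ω = W - 2 ^ (n - (k : ℕ)) + 1} = ENNReal.ofReal (1 / n)) :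
    ((1 : ℝ) - (1 - 1 / n) ^ n ≤
      ∫ ω, if ∃ j : Fin n,
          S j ω = W - 2 ^ (n - (j : ℕ)) + 1 ∧
          (∀ k : Fin n, j < k → S k ω = 2 ^ (n - (k : ℕ) - 1)) ∧
          (W - 2 ^ (n - (j : ℕ)) + 1) +
            (∑ k ∈ Finset.univ.filter fun k : Fin n => j < k,
              (2 : ℝ) ^ (n - (k : ℕ) - 1)) ≤ W
        then (1 : ℝ) else 0) ∧
    (1 : ℝ) - Real.exp (-1) ≤ (1 : ℝ) - (1 - 1 / n) ^ n := by
  have hnR : (1 : ℝ) ≤ n := by exact_mod_cast hn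
  have hnpos : (0 : ℝ) < n := lt_of_lt_of_le one_pos hnR
  -- large ≠ small for each k
  have hne : ∀ k : Fin n, W - 2 ^ (n - (k : ℕ)) + 1 ≠ (2 : ℝ) ^ (n - (k : ℕ) - 1) := by
    intro k
    have h1 : (2 : ℝ) ^ (n - (k : ℕ)) ≤ 2 ^ n :=
      pow_le_pow_right₀ one_le_two (Nat.sub_le _ _)
    have h2 : (2 : ℝ) ^ (n - (k : ℕ) - 1) ≤ 2 ^ n :=
      pow_le_pow_right₀ one_le_two (le_trans (Nat.sub_le _ _) (Nat.sub_le _ _))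
    have h3 : (2 : ℝ) ^ (n + 1) = 2 ^ n + 2 ^ n := by ring
    nlinarith
  -- the budget condition always holds
  have hbudget : ∀ j : Fin n,
      (W - 2 ^ (n - (j : ℕ)) + 1) +
        (∑ k ∈ Finset.univ.filter fun k : Fin n => j < k,
          (2 : ℝ) ^ (n - (k : ℕ) - 1)) ≤ W := by
    intro j
    have hsum : (∑ k ∈ Finset.univ.filter fun k : Fin n => j < k,
        (2 : ℝ) ^ (n - (k : ℕ) - 1)) = 2 ^ (n - (j : ℕ) - 1) - 1 := by
      have step1 : (∑ k ∈ Finset.univ.filter fun k : Fin n => j < k,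
          (2 : ℝ) ^ (n - (k : ℕ) - 1))
          = ∑ k ∈ Finset.range n, if (j : ℕ) < k then (2 : ℝ) ^ (n - k - 1) else 0 := by
        rw [Finset.sum_filter,
          ← Fin.sum_univ_eq_sum_range (fun k => if (j : ℕ) < k then (2 : ℝ) ^ (n - k - 1) else 0)]
        exact Finset.sum_congr rfl fun a _ => if_congr Fin.lt_def rfl rfl
      have step2 : (Finset.range n).filter (fun k => (j : ℕ) < k) = Finset.Ico ((j : ℕ) + 1) n := by
        ext x
        simp only [Finset.mem_filter, Finset.mem_range, Finset.mem_Ico]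
        omega
      rw [step1, ← Finset.sum_filter, step2]
      have := geom_aux n (n - (j : ℕ) - 1) (by omega)
      have hnd : n - (n - (j : ℕ) - 1) = (j : ℕ) + 1 := by omega
      rw [hnd] at this
      rw [this]
    rw [hsum]
    have : (2 : ℝ) ^ (n - (j : ℕ) - 1) ≤ 2 ^ (n - (j : ℕ)) :=
      pow_le_pow_right₀ one_le_two (Nat.sub_le _ _)
    linarith
  -- the event equals the complement of "all small"
  set B : Set Ω := ⋂ k : Fin n, {ω | S k ω = 2 ^ (n - (k : ℕ) - 1)} with hB
  have hBmeas : MeasurableSet B :=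
    MeasurableSet.iInter fun k => (hmeas k) (measurableSet_singleton _)
  have hiff : ∀ ω, (∃ j : Fin n,
      S j ω = W - 2 ^ (n - (j : ℕ)) + 1 ∧
      (∀ k : Fin n, j < k → S k ω = 2 ^ (n - (k : ℕ) - 1)) ∧
      (W - 2 ^ (n - (j : ℕ)) + 1) +
        (∑ k ∈ Finset.univ.filter fun k : Fin n => j < k,
          (2 : ℝ) ^ (n - (k : ℕ) - 1)) ≤ W) ↔ ω ∈ Bᶜ := by
    intro ω
    constructor
    · rintro ⟨j, hj, -, -⟩ hωB
      have : S j ω = 2 ^ (n - (j : ℕ) - 1) := Set.mem_iInter.mp hωB j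
      exact hne j (hj ▸ this)
    · intro hωB
      have : ∃ k : Fin n, S k ω ≠ 2 ^ (n - (k : ℕ) - 1) := by
        by_contra h
        push_neg at h
        exact hωB (Set.mem_iInter.mpr h)
      obtain ⟨k0, hk0⟩ := this
      set T : Finset (Fin n) := Finset.univ.filter fun k => S k ω ≠ 2 ^ (n - (k : ℕ) - 1)
      have hT : T.Nonempty := ⟨k0, by simp [T, hk0]⟩
      set j := T.max' hT
      have hjT : j ∈ T := T.max'_mem hT
      have hjlarge : S j ω = W - 2 ^ (n - (j : ℕ)) + 1 := by
        have := (Finset.mem_filter.mp hjT).2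
        rcases htwo j ω with h | h
        · exact h
        · exact absurd h this
      refine ⟨j, hjlarge, fun k hk => ?_, hbudget j⟩
      by_contra hksmall
      have hkT : k ∈ T := Finset.mem_filter.mpr ⟨Finset.mem_univ _, hksmall⟩
      exact absurd (T.le_max' k hkT) (not_le.mpr hk)
  -- compute the probability of B
  have hsmall_eq : ∀ k : Fin n,
      {ω | S k ω = (2 : ℝ) ^ (n - (k : ℕ) - 1)} = {ω | S k ω = W - 2 ^ (n - (k : ℕ)) + 1}ᶜ := by
    intro k
    ext ω
    simp only [Set.mem_setOf_eq, Set.mem_compl_iff]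
    constructor
    · intro h h'
      exact hne k (h' ▸ h)
    · intro h
      rcases htwo k ω with h' | h'
      · exact absurd h' h
      · exact h'
  have hone : (1 : ℝ) / n ≤ 1 := by
    rw [div_le_one hnpos]; exact hnR
  have hsmall_prob : ∀ k : Fin n,
      ℙ {ω | S k ω = (2 : ℝ) ^ (n - (k : ℕ) - 1)} = ENNReal.ofReal (1 - 1 / n) := by
    intro k
    have hlargeM : MeasurableSet {ω | S k ω = W - 2 ^ (n - (k : ℕ)) + 1} :=
      (hmeas k) (measurableSet_singleton _)
    rw [hsmall_eq k, measure_compl hlargeM (measure_ne_top _ _), hprob k, measure_univ]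
    rw [ENNReal.ofReal_sub _ (by positivity), ENNReal.ofReal_one]
  have hPB : ℙ B = ENNReal.ofReal ((1 - 1 / n) ^ n) := by
    have hBeq : B = ⋂ k ∈ Finset.univ, S k ⁻¹' {(2 : ℝ) ^ (n - (k : ℕ) - 1)} := by
      simp only [Finset.mem_univ, Set.iInter_true, hB]
      rfl
    rw [hBeq, hindep.measure_inter_preimage_eq_mul Finset.univ
      (sets := fun k => {(2 : ℝ) ^ (n - (k : ℕ) - 1)}) (fun i _ => measurableSet_singleton _)]
    have : ∀ k : Fin n, ℙ (S k ⁻¹' {(2 : ℝ) ^ (n - (k : ℕ) - 1)})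
        = ENNReal.ofReal (1 - 1 / n) := fun k => hsmall_prob k
    rw [Finset.prod_congr rfl fun k _ => this k, Finset.prod_const,
      Finset.card_univ, Fintype.card_fin, ← ENNReal.ofReal_pow (by linarith [hone])]
  -- rewrite the integral
  have hint : (∫ ω, if ∃ j : Fin n,
          S j ω = W - 2 ^ (n - (j : ℕ)) + 1 ∧
          (∀ k : Fin n, j < k → S k ω = 2 ^ (n - (k : ℕ) - 1)) ∧
          (W - 2 ^ (n - (j : ℕ)) + 1) +
            (∑ k ∈ Finset.univ.filter fun k : Fin n => j < k,
              (2 : ℝ) ^ (n - (k : ℕ) - 1)) ≤ W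
        then (1 : ℝ) else 0)
      = (ℙ Bᶜ).toReal := by
    show _ = (ℙ : Measure Ω).real Bᶜ
    rw [← integral_indicator_one hBmeas.compl]
    congr 1
    ext ω
    rw [Set.indicator_apply]
    simp only [Pi.one_apply]
    by_cases h : ω ∈ Bᶜ
    · rw [if_pos h, if_pos ((hiff ω).mpr h)]
    · rw [if_neg h, if_neg (fun hc => h ((hiff ω).mp hc))]
  have hbase : (0 : ℝ) ≤ 1 - 1 / n := by linarith
  have hPBc : (ℙ Bᶜ).toReal = 1 - (1 - 1 / n) ^ n := by
    have hle : ENNReal.ofReal ((1 - 1 / (n : ℝ)) ^ n) ≤ 1 := by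
      rw [← ENNReal.ofReal_one]
      refine ENNReal.ofReal_le_ofReal (pow_le_one₀ hbase ?_)
      have h0 : (0 : ℝ) ≤ 1 / n := by positivity
      linarith
    rw [measure_compl hBmeas (measure_ne_top _ _), measure_univ, hPB,
      ENNReal.toReal_sub_of_le hle ENNReal.one_ne_top, ENNReal.toReal_one,
      ENNReal.toReal_ofReal (by positivity)]
  constructor
  · rw [hint, hPBc]
  · have h1 : (1 - 1 / (n : ℝ)) ^ n ≤ Real.exp (-1) := by
      have h2 : (1 : ℝ) - 1 / n ≤ Real.exp (-(1 / n)) := by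
        have := Real.add_one_le_exp (-(1 / (n : ℝ)))
        linarith
      calc (1 - 1 / (n : ℝ)) ^ n ≤ (Real.exp (-(1 / n))) ^ n :=
            pow_le_pow_left₀ hbase h2 n
        _ = Real.exp (-1) := by
            rw [← Real.exp_nat_mul]
            congr 1
            field_simp
    linarith
end
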